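/- If G is an almost bipartite graph and G is not a König-Egerváry graph, then corona(G) ∪ N(core(G)) = V(G). -/

import Mathlib

namespace AlmostBip

open SimpleGraph

variable {V : Type*}

/-- A set of vertices is independent if no two of its vertices are adjacent. -/
def IsIndepSet (G : SimpleGraph V) (s : Set V) : Prop :=
  s.Pairwise fun a b => ¬ G.Adj a b

/-- The independence number `α(G)`: the maximum size of an independent set. -/
noncomputable def alpha (G : SimpleGraph V) : ℕ :=
  sSup {n | ∃ s : Set V, IsIndepSet G s ∧ s.ncard = n}

/-- `Ω(G)`: the family of all maximum independent sets. -/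
def Omega (G : SimpleGraph V) : Set (Set V) :=
  {s | IsIndepSet G s ∧ s.ncard = alpha G}

/-- `core(G)`: the intersection of all maximum independent sets. -/
def core (G : SimpleGraph V) : Set V := ⋂₀ Omega G

/-- `corona(G)`: the union of all maximum independent sets. -/
def corona (G : SimpleGraph V) : Set V := ⋃₀ Omega G

/-- A matching: a set of edges of `G` that are pairwise non-incident. -/
def IsMatching (G : SimpleGraph V) (M : Set (Sym2 V)) : Prop :=
  M ⊆ G.edgeSet ∧ M.Pairwise fun e f => ∀ x, x ∈ e → x ∉ f

/-- The matching number `μ(G)`: the maximum size of a matching. -/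
noncomputable def mu (G : SimpleGraph V) : ℕ :=
  sSup {n | ∃ M : Set (Sym2 V), IsMatching G M ∧ M.ncard = n}

/-- A König-Egerváry graph: `α(G) + μ(G) = |V(G)|`. -/
def KonigEgervary (G : SimpleGraph V) : Prop :=
  alpha G + mu G = Nat.card V

/-- `N(A)`: the set of vertices having a neighbour in `A`. -/
def nbhd (G : SimpleGraph V) (A : Set V) : Set V :=
  {x | ∃ a ∈ A, G.Adj x a}

/-- The difference `d_G(A) = |A| - |N(A)|`. -/
noncomputable def diffOf (G : SimpleGraph V) (A : Set V) : ℤ :=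
  (A.ncard : ℤ) - ((nbhd G A).ncard : ℤ)

/-- The critical difference `d(G) = max {d_G(A) : A ⊆ V(G)}`. -/
noncomputable def critDiff (G : SimpleGraph V) : ℤ :=
  sSup {d | ∃ A : Set V, diffOf G A = d}

/-- A set is critical if its difference attains the critical difference. -/
def IsCriticalSet (G : SimpleGraph V) (A : Set V) : Prop :=
  diffOf G A = critDiff G

/-- `ker(G)`: the intersection of all critical independent sets. -/
def ker (G : SimpleGraph V) : Set V :=
  ⋂₀ {A : Set V | IsCriticalSet G A ∧ IsIndepSet G A}

/-- A closed walk is an odd cycle if it is a cycle of odd length. -/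
def IsOddCycle (G : SimpleGraph V) {v : V} (c : G.Walk v v) : Prop :=
  c.IsCycle ∧ Odd c.length

/-- `c` is the unique odd cycle of `G`: it is an odd cycle and any odd cycle
of `G` has the same edge set as `c`. -/
def UniqueOddCycle (G : SimpleGraph V) {v : V} (c : G.Walk v v) : Prop :=
  IsOddCycle G c ∧
    ∀ (u : V) (c' : G.Walk u u), IsOddCycle G c' →
      {e | e ∈ c'.edges} = {e | e ∈ c.edges}

/-- `G` is almost bipartite if it has a unique odd cycle. -/
def AlmostBipartite (G : SimpleGraph V) : Prop :=
  ∃ (v : V) (c : G.Walk v v), UniqueOddCycle G c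

/-- `V(C)`: the vertex set of a cycle given as a closed walk. -/
def cycleVerts {G : SimpleGraph V} {v : V} (c : G.Walk v v) : Set V :=
  {u | u ∈ c.support}

/-- `E(C)`: the edge set of a cycle given as a closed walk. -/
def cycleEdges {G : SimpleGraph V} {v : V} (c : G.Walk v v) : Set (Sym2 V) :=
  {e | e ∈ c.edges}

/-- `G - E(C)`: the graph `G` with the edges of the cycle deleted. -/
def Gdel (G : SimpleGraph V) {v : V} (c : G.Walk v v) : SimpleGraph V :=
  G.deleteEdges (cycleEdges c)

/-- `V(D_y)`: the vertex set of the connected component of `G - E(C)`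
containing `y`. -/
def Dset (G : SimpleGraph V) {v : V} (c : G.Walk v v) (y : V) : Set V :=
  {u | (Gdel G c).Reachable u y}

/-- `D_y`: the connected component of `G - E(C)` containing `y`,
as an induced subgraph. -/
def Dgraph (G : SimpleGraph V) {v : V} (c : G.Walk v v) (y : V) :
    SimpleGraph ↥(Dset G c y) :=
  SimpleGraph.induce (Dset G c y) (Gdel G c)

/-- `D_y - y`: the component `D_y` with the vertex `y` deleted. -/
def DgraphMinus (G : SimpleGraph V) {v : V} (c : G.Walk v v) (y : V) :
    SimpleGraph ↥(Dset G c y \ {y}) :=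
  SimpleGraph.induce (Dset G c y \ {y}) (Gdel G c)

/-- `N₁(C)`: the vertices off the cycle having a neighbour on the cycle. -/
def N1 (G : SimpleGraph V) {v : V} (c : G.Walk v v) : Set V :=
  {u | u ∉ cycleVerts c ∧ ∃ w ∈ cycleVerts c, G.Adj u w}

section Aux
variable {V : Type*}

section Walks
variable {H : SimpleGraph V}

lemma path_edge_endpoint {b u : V} (q : H.Walk b u) (hq : q.IsPath) (he : s(u, b) ∈ q.edges) :
    q.length = 1 := by
  induction q with
  | nil => simp at he
  | @cons b c u hadj r ih =>
    rw [Walk.cons_isPath_iff] at hq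
    rw [Walk.edges_cons] at he
    rcases List.mem_cons.1 he with heq | hmem
    · rw [Sym2.eq_iff] at heq
      rcases heq with ⟨rfl, rfl⟩ | ⟨rfl, -⟩
      · exact absurd (r.end_mem_support) hq.2
      · have : r = Walk.nil := Walk.isPath_iff_eq_nil.1 hq.1
        subst this
        simp
    · exact absurd (r.snd_mem_support_of_mem_edges hmem) hq.2

theorem exists_odd_cycle [DecidableEq V] :
    ∀ (n : ℕ) {u : V} (p : H.Walk u u), p.length = n → Odd n →
      ∃ (x : V) (c : H.Walk x x), c.IsCycle ∧ Odd c.length ∧ ∀ e ∈ c.edges, e ∈ p.edges := by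
  intro n
  induction n using Nat.strong_induction_on with
  | _ n IH =>
  intro u p hlen hodd
  by_cases hnd : p.support.tail.Nodup
  · -- p is (essentially) a cycle
    cases p with
    | nil =>
      exact absurd (hlen ▸ hodd) (by simp)
    | @cons _ b _ hadj q =>
      rw [Walk.support_cons] at hnd
      simp only [List.tail_cons] at hnd
      have hqpath : q.IsPath := (Walk.isPath_def q).2 hnd
      have hnotedge : s(u, b) ∉ q.edges := by
        intro hmem
        have h1 : q.length = 1 := path_edge_endpoint q hqpath hmem
        rw [Walk.length_cons, h1] at hlen
        subst hlen
        simp [Nat.odd_iff] at hodd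
      have hcyc : (Walk.cons hadj q).IsCycle := (Walk.cons_isCycle_iff q hadj).2 ⟨hqpath, hnotedge⟩
      exact ⟨u, Walk.cons hadj q, hcyc, hlen ▸ hodd, fun e he => he⟩
  · -- find duplicated vertex, rotate, split
    obtain ⟨x, hx2⟩ : ∃ x, 2 ≤ p.support.tail.count x := by
      by_contra hcon
      push_neg at hcon
      exact hnd (List.nodup_iff_count_le_one.2 fun a => by have := hcon a; omega)
    have hxmem : x ∈ p.support := by
      have : x ∈ p.support.tail := List.count_pos_iff.1 (by omega)
      exact List.mem_of_mem_tail this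
    obtain ⟨q, hql, hqe, hqc⟩ : ∃ q : H.Walk x x, q.length = n ∧
        (∀ e ∈ q.edges, e ∈ p.edges) ∧ 2 ≤ q.support.tail.count x := by
      refine ⟨p.rotate x hxmem, ?_, ?_, ?_⟩
      · have h1 := congrArg Walk.length (p.take_spec hxmem)
        rw [Walk.length_append] at h1
        have h2 : (p.rotate x hxmem).length =
            (p.dropUntil x hxmem).length + (p.takeUntil x hxmem).length := by
          rw [Walk.rotate, Walk.length_append]
        omega
      · intro e he
        exact (p.rotate_edges x hxmem).mem_iff.1 he
      · have hperm := (p.support_rotate x hxmem).perm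
        rw [hperm.count_eq]
        exact hx2
    suffices hsuff : ∃ (x' : V) (c : H.Walk x' x'), c.IsCycle ∧ Odd c.length ∧
        ∀ e ∈ c.edges, e ∈ q.edges by
      obtain ⟨x', c, h1, h2, h3⟩ := hsuff
      exact ⟨x', c, h1, h2, fun e he => hqe e (h3 e he)⟩
    clear hxmem hx2 hnd hlen hqe p
    cases q with
    | nil =>
      rw [Walk.length_nil] at hql
      subst hql
      exact absurd hodd (by simp)
    | @cons _ b₂ _ hadj₂ q₂ =>
      rw [Walk.support_cons, List.tail_cons] at hqc
      have hxq : x ∈ q₂.support := List.count_pos_iff.1 (by omega)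
      set t := q₂.takeUntil x hxq with ht
      set d := q₂.dropUntil x hxq with hd
      have hsum : t.length + d.length = q₂.length := by
        have := congrArg Walk.length (q₂.take_spec hxq)
        rw [Walk.length_append] at this
        exact this
      have hdpos : 1 ≤ d.length := by
        by_contra hcon
        push_neg at hcon
        interval_cases hdl : d.length
        · have hsupp := congrArg Walk.support (q₂.take_spec hxq)
          rw [Walk.support_append] at hsupp
          have hdtail : d.support.tail = [] := by
            have h1 : d.support.length = 1 := by
              rw [Walk.length_support]; omega
            have h2 : d.support.tail.length = 0 := by
              rw [List.length_tail, h1]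
            exact List.length_eq_zero_iff.1 h2
          rw [hdtail, List.append_nil] at hsupp
          have : q₂.support.count x = 1 := by
            rw [← hsupp]
            exact q₂.count_support_takeUntil_eq_one hxq
          omega
      have hlc : (Walk.cons hadj₂ t).length + d.length = n := by
        rw [Walk.length_cons]
        rw [Walk.length_cons] at hql
        omega
      have hparity : Odd (Walk.cons hadj₂ t).length ∨ Odd d.length := by
        rcases Nat.even_or_odd (Walk.cons hadj₂ t).length with he | ho
        · right
          rw [Nat.even_iff] at he
          rw [Nat.odd_iff] at hodd ⊢
          omega
        · exact Or.inl ho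
      have hsubc : ∀ e ∈ (Walk.cons hadj₂ t).edges, e ∈ (Walk.cons hadj₂ q₂).edges := by
        intro e he
        rw [Walk.edges_cons] at he ⊢
        rcases List.mem_cons.1 he with rfl | hmem
        · exact List.mem_cons_self
        · exact List.mem_cons_of_mem _ (q₂.edges_takeUntil_subset hxq hmem)
      have hsubd : ∀ e ∈ d.edges, e ∈ (Walk.cons hadj₂ q₂).edges := by
        intro e he
        rw [Walk.edges_cons]
        exact List.mem_cons_of_mem _ (q₂.edges_dropUntil_subset hxq he)
      rcases hparity with ho | ho
      · obtain ⟨x', c, hc1, hc2, hc3⟩ :=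
          IH (Walk.cons hadj₂ t).length (by omega) (Walk.cons hadj₂ t) rfl ho
        exact ⟨x', c, hc1, hc2, fun e he => hsubc e (hc3 e he)⟩
      · obtain ⟨x', c, hc1, hc2, hc3⟩ := IH d.length (by
          have : 1 ≤ (Walk.cons hadj₂ t).length := by rw [Walk.length_cons]; omega
          omega) d rfl ho
        exact ⟨x', c, hc1, hc2, fun e he => hsubd e (hc3 e he)⟩


end Walks

lemma exists_coloring {G : SimpleGraph V} {v₀ : V} {c : G.Walk v₀ v₀}
    (hU : UniqueOddCycle G c) {w : V} (hw : w ∈ c.support) :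
    ∃ φ : V → Prop, ∀ x y, x ≠ w → y ≠ w → G.Adj x y → (φ x ↔ ¬ φ y) := by
  classical
  set H := G.deleteEdges {e | w ∈ e} with hH
  have hHle : H ≤ G := G.deleteEdges_le _
  have hHadj : ∀ x y, x ≠ w → y ≠ w → G.Adj x y → H.Adj x y := by
    intro x y hx hy hadj
    rw [hH, SimpleGraph.deleteEdges_adj]
    refine ⟨hadj, ?_⟩
    simp only [Set.mem_setOf_eq, Sym2.mem_iff]
    push_neg
    exact ⟨Ne.symm hx, Ne.symm hy⟩
  -- the unique odd cycle passes through w, so H has no odd closed walk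
  have noOddWalk : ∀ (x : V) (p : H.Walk x x), ¬ Odd p.length := by
    intro x p hodd
    obtain ⟨y, cy, hcyc, hcodd, hce⟩ := exists_odd_cycle p.length p rfl hodd
    have hcycG : (cy.mapLe hHle).IsCycle := (Walk.mapLe_isCycle hHle).2 hcyc
    have hlenG : (cy.mapLe hHle).length = cy.length := by simp [Walk.mapLe]
    have hedges := hU.2 y (cy.mapLe hHle) ⟨hcycG, hlenG ▸ hcodd⟩
    -- find the edge of c at w
    have hcycrot : (c.rotate w hw).IsCycle := hU.1.1.rotate hw
    obtain ⟨b, hb, e₀mem⟩ : ∃ (b : V), G.Adj w b ∧ s(w, b) ∈ (c.rotate w hw).edges := by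
      cases hrot : c.rotate w hw with
      | nil =>
        rw [hrot] at hcycrot
        exact absurd rfl hcycrot.ne_nil
      | @cons _ b _ hadj q =>
        exact ⟨b, hadj, by rw [Walk.edges_cons]; exact List.mem_cons_self⟩
    have e₀c : s(w, b) ∈ c.edges := (c.rotate_edges w hw).mem_iff.1 e₀mem
    have e₀cy : s(w, b) ∈ (cy.mapLe hHle).edges := by
      have : s(w, b) ∈ {e | e ∈ c.edges} := e₀c
      rw [← hedges] at this
      exact this
    have e₀cy' : s(w, b) ∈ cy.edges := by
      rw [Walk.mapLe, Walk.edges_map] at e₀cy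
      obtain ⟨e', he', heq⟩ := List.mem_map.1 e₀cy
      have he'id : Sym2.map (Hom.ofLE hHle) e' = e' := by
        induction e' using Sym2.ind with
        | _ a b => simp [Hom.ofLE_apply]
      rw [he'id] at heq
      rwa [heq] at he'
    have : s(w, b) ∈ H.edgeSet := cy.edges_subset_edgeSet e₀cy'
    rw [hH, SimpleGraph.edgeSet_deleteEdges] at this
    exact this.2 (by simp)
  -- parity of walks between fixed endpoints is constant
  have hpar : ∀ (a b : V) (p q : H.Walk a b), (Odd p.length ↔ Odd q.length) := by
    intro a b p q
    have hclosed := noOddWalk a (p.append q.reverse)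
    rw [Walk.length_append, Walk.length_reverse] at hclosed
    rw [Nat.odd_iff] at hclosed ⊢
    rw [Nat.odd_iff]
    omega
  -- root of each component
  have hr : ∀ x : V, H.Reachable ((H.connectedComponentMk x).out) x := by
    intro x
    have := (H.connectedComponentMk x).out_eq
    exact (SimpleGraph.ConnectedComponent.eq.1 this)
  refine ⟨fun x => ∃ p : H.Walk ((H.connectedComponentMk x).out) x, Odd p.length, ?_⟩
  intro x y hx hy hadj
  have hadjH : H.Adj x y := hHadj x y hx hy hadj
  have hcomp : H.connectedComponentMk x = H.connectedComponentMk y :=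
    SimpleGraph.ConnectedComponent.sound hadjH.reachable
  obtain ⟨p₀⟩ := hr x
  have hx_iff : (∃ p : H.Walk ((H.connectedComponentMk x).out) x, Odd p.length) ↔
      Odd p₀.length := by
    constructor
    · rintro ⟨p, hp⟩
      exact (hpar _ _ p p₀).1 hp
    · intro h
      exact ⟨p₀, h⟩
  set q₀ : H.Walk ((H.connectedComponentMk y).out) y :=
    (p₀.concat hadjH).copy (by rw [hcomp]) rfl with hq₀
  have hq₀len : q₀.length = p₀.length + 1 := by
    rw [hq₀, Walk.length_copy, Walk.length_concat]
  have hy_iff : (∃ p : H.Walk ((H.connectedComponentMk y).out) y, Odd p.length) ↔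
      Odd q₀.length := by
    constructor
    · rintro ⟨p, hp⟩
      exact (hpar _ _ p q₀).1 hp
    · intro h
      exact ⟨q₀, h⟩
  show (∃ p : H.Walk ((H.connectedComponentMk x).out) x, Odd p.length) ↔
      ¬ (∃ p : H.Walk ((H.connectedComponentMk y).out) y, Odd p.length)
  rw [hx_iff, hy_iff, hq₀len]
  rw [Nat.odd_iff, Nat.odd_iff]
  omega


section Basics
variable [Fintype V]

variable {G : SimpleGraph V}

lemma indep_ncard_le_alpha {s : Set V} (hs : IsIndepSet G s) : s.ncard ≤ alpha G := by
  apply le_csSup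
  · refine ⟨Fintype.card V, ?_⟩
    rintro n ⟨t, _, rfl⟩
    simpa [Set.ncard_univ] using Set.ncard_le_ncard (Set.subset_univ t) Set.finite_univ
  · exact ⟨s, hs, rfl⟩

lemma alpha_mem (G : SimpleGraph V) : ∃ s : Set V, IsIndepSet G s ∧ s.ncard = alpha G := by
  have h : alpha G ∈ {n | ∃ s : Set V, IsIndepSet G s ∧ s.ncard = n} := by
    apply Nat.sSup_mem
    · exact ⟨0, ∅, by simp [IsIndepSet], by simp⟩
    · refine ⟨Fintype.card V, ?_⟩
      rintro n ⟨t, _, rfl⟩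
      simpa [Set.ncard_univ] using Set.ncard_le_ncard (Set.subset_univ t) Set.finite_univ
  exact h

lemma Omega_nonempty (G : SimpleGraph V) : (Omega G).Nonempty := by
  obtain ⟨s, hs, h⟩ := alpha_mem G
  exact ⟨s, hs, h⟩

/-- If `v` is not in `S ∈ Ω` then it has a neighbour in `S`. -/
lemma exists_adj_of_maximal {S : Set V} (hS : S ∈ Omega G) {v : V} (hv : v ∉ S) :
    ∃ u ∈ S, G.Adj v u := by
  by_contra h
  push_neg at h
  have hins : IsIndepSet G (insert v S) := by
    intro a ha b hb hab
    rcases ha with rfl | ha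
    · rcases hb with rfl | hb
      · exact absurd rfl hab
      · exact h b hb
    · rcases hb with rfl | hb
      · intro hadj; exact h a ha hadj.symm
      · exact hS.1 ha hb hab
  have hcard : (insert v S).ncard = alpha G + 1 := by
    rw [Set.ncard_insert_of_notMem hv (Set.toFinite S), hS.2]
  have := indep_ncard_le_alpha hins
  omega

/-- matchings are not larger than `|V| - α`. -/
lemma matching_card_le (G : SimpleGraph V) {M : Set (Sym2 V)} (hM : IsMatching G M) :
    alpha G + M.ncard ≤ Fintype.card V := by
  classical
  cases isEmpty_or_nonempty V with
  | inl h =>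
    have hM0 : M = ∅ := by
      ext e
      simp only [Set.mem_empty_iff_false, iff_false]
      intro he
      induction e using Sym2.ind with
      | _ a b => exact (IsEmpty.false a).elim
    obtain ⟨S, hSi, hSc⟩ := Omega_nonempty G
    have hS0 : S = ∅ := by
      ext x; simp only [Set.mem_empty_iff_false, iff_false]; intro _; exact (IsEmpty.false x).elim
    have : alpha G = 0 := by rw [← hSc, hS0]; simp
    simp [hM0, this]
  | inr h =>
  obtain ⟨S, hSi, hSc⟩ := Omega_nonempty G
  have hpick : ∀ e ∈ M, ∃ x, x ∈ e ∧ x ∉ S := by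
    intro e he
    induction e using Sym2.ind with
    | _ a b =>
      have hadj : G.Adj a b := (G.mem_edgeSet).1 (hM.1 he)
      by_contra hcon
      push_neg at hcon
      have ha : a ∈ S := hcon a (by simp)
      have hb : b ∈ S := hcon b (by simp)
      exact hSi ha hb hadj.ne hadj
  choose f hf1 hf2 using hpick
  set F : Sym2 V → V := fun e => if he : e ∈ M then f e he else Classical.arbitrary V with hF
  have hFmem : ∀ e (he : e ∈ M), F e ∈ e ∧ F e ∉ S := by
    intro e he
    simp only [hF, dif_pos he]
    exact ⟨hf1 e he, hf2 e he⟩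
  have hinj : Set.InjOn F M := by
    intro e₁ h₁ e₂ h₂ hfe
    by_contra hne
    have h1 := (hFmem e₁ h₁).1
    have h2 := (hFmem e₂ h₂).1
    rw [hfe] at h1
    exact (hM.2 h₁ h₂ hne) (F e₂) h1 h2
  have himg : F '' M ⊆ Sᶜ := by
    rintro x ⟨e, he, rfl⟩
    exact (hFmem e he).2
  have h1 : M.ncard = (F '' M).ncard := (Set.ncard_image_of_injOn hinj).symm
  have h2 : (F '' M).ncard ≤ (Sᶜ).ncard := Set.ncard_le_ncard himg (Set.toFinite _)
  have h3 : S.ncard + (Sᶜ).ncard = Nat.card V := Set.ncard_add_ncard_compl S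
  rw [Nat.card_eq_fintype_card] at h3
  omega


end Basics

section Fold
variable [Fintype V] {G : SimpleGraph V} {U W : Set V}

lemma indep_subset {A B : Set V} (h : B ⊆ A) (hA : IsIndepSet G A) : IsIndepSet G B :=
  Set.Pairwise.mono h hA

lemma op_indep (hU : IsIndepSet G U) (hW : IsIndepSet G W) (hdisj : Disjoint U W)
    {A B : Set V} (hA : IsIndepSet G A) (hB : IsIndepSet G B)
    (hAc : A ⊆ U ∪ W) (hBc : B ⊆ U ∪ W) :
    IsIndepSet G ((U ∩ (A ∪ B)) ∪ (W ∩ (A ∩ B))) := by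
  intro a ha b hb hne hadj
  rcases ha with ⟨haU, haAB⟩ | ⟨haW, haA, haB⟩
  · rcases hb with ⟨hbU, -⟩ | ⟨hbW, hbA, hbB⟩
    · exact hU haU hbU hne hadj
    · rcases haAB with haA | haB
      · exact hA haA hbA hne hadj
      · exact hB haB hbB hne hadj
  · rcases hb with ⟨hbU, hbAB⟩ | ⟨hbW, -, -⟩
    · rcases hbAB with hbA | hbB
      · exact hA haA hbA hne hadj
      · exact hB haB hbB hne hadj
    · exact hW haW hbW hne hadj

lemma op_ncard (hdisj : Disjoint U W) {A B : Set V} (hAc : A ⊆ U ∪ W) (hBc : B ⊆ U ∪ W) :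
    ((U ∩ (A ∪ B)) ∪ (W ∩ (A ∩ B))).ncard + ((U ∩ (A ∩ B)) ∪ (W ∩ (A ∪ B))).ncard
      = A.ncard + B.ncard := by
  have hdU : Disjoint (U ∩ (A ∪ B)) (W ∩ (A ∩ B)) :=
    (hdisj.mono Set.inter_subset_left Set.inter_subset_left)
  have hdW : Disjoint (U ∩ (A ∩ B)) (W ∩ (A ∪ B)) :=
    (hdisj.mono Set.inter_subset_left Set.inter_subset_left)
  rw [Set.ncard_union_eq hdU (Set.toFinite _) (Set.toFinite _),
    Set.ncard_union_eq hdW (Set.toFinite _) (Set.toFinite _)]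
  have hUid : (U ∩ (A ∪ B)).ncard + (U ∩ (A ∩ B)).ncard = (U ∩ A).ncard + (U ∩ B).ncard := by
    have h1 : U ∩ (A ∪ B) = (U ∩ A) ∪ (U ∩ B) := by rw [Set.inter_union_distrib_left]
    have h2 : U ∩ (A ∩ B) = (U ∩ A) ∩ (U ∩ B) := by
      ext x; simp only [Set.mem_inter_iff]; tauto
    rw [h1, h2]
    exact Set.ncard_union_add_ncard_inter _ _ (Set.toFinite _) (Set.toFinite _)
  have hWid : (W ∩ (A ∪ B)).ncard + (W ∩ (A ∩ B)).ncard = (W ∩ A).ncard + (W ∩ B).ncard := by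
    have h1 : W ∩ (A ∪ B) = (W ∩ A) ∪ (W ∩ B) := by rw [Set.inter_union_distrib_left]
    have h2 : W ∩ (A ∩ B) = (W ∩ A) ∩ (W ∩ B) := by
      ext x; simp only [Set.mem_inter_iff]; tauto
    rw [h1, h2]
    exact Set.ncard_union_add_ncard_inter _ _ (Set.toFinite _) (Set.toFinite _)
  have hAsplit : (U ∩ A).ncard + (W ∩ A).ncard = A.ncard := by
    rw [← Set.ncard_union_eq (hdisj.mono Set.inter_subset_left Set.inter_subset_left)
      (Set.toFinite _) (Set.toFinite _)]
    congr 1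
    ext x
    constructor
    · rintro (⟨-, h⟩ | ⟨-, h⟩) <;> exact h
    · intro hx
      rcases hAc hx with h | h
      · exact Or.inl ⟨h, hx⟩
      · exact Or.inr ⟨h, hx⟩
  have hBsplit : (U ∩ B).ncard + (W ∩ B).ncard = B.ncard := by
    rw [← Set.ncard_union_eq (hdisj.mono Set.inter_subset_left Set.inter_subset_left)
      (Set.toFinite _) (Set.toFinite _)]
    congr 1
    ext x
    constructor
    · rintro (⟨-, h⟩ | ⟨-, h⟩) <;> exact h
    · intro hx
      rcases hBc hx with h | h
      · exact Or.inl ⟨h, hx⟩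
      · exact Or.inr ⟨h, hx⟩
  omega

lemma main_fold {w : V} (hU : IsIndepSet G U) (hW : IsIndepSet G W) (hdisj : Disjoint U W)
    (hwU : w ∉ U) (hwW : w ∉ W) (hcover : ∀ x, x ≠ w → x ∈ U ∪ W)
    (hT₀ : ∃ T, T ∈ Omega G ∧ w ∉ T)
    (hnp : ∀ y, G.Adj w y → (∀ S ∈ Omega G, w ∉ S → y ∈ S) →
      (∃ S ∈ Omega G, w ∈ S) → False) :
    ∃ J, J ∈ Omega G ∧ w ∉ J ∧ ∀ S ∈ Omega G, W ∩ J ⊆ S := by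
  classical
  obtain ⟨T₀, hT₀Ω, hT₀w⟩ := hT₀
  have hsub : ∀ {S : Set V}, S ∈ Omega G → w ∉ S → S ⊆ U ∪ W := by
    intro S hS hwS x hx
    exact hcover x (fun h => hwS (h ▸ hx))
  -- Stage 1 : fold over MIS avoiding w
  have stage1 : ∀ (F : Finset (Set V)), (∀ S ∈ F, S ∈ Omega G ∧ w ∉ S) →
      ∃ J, J ∈ Omega G ∧ w ∉ J ∧ J ⊆ U ∪ W ∧ ∀ S ∈ F, W ∩ J ⊆ S := by
    intro F
    induction F using Finset.induction_on with
    | empty =>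
      intro _
      exact ⟨T₀, hT₀Ω, hT₀w, hsub hT₀Ω hT₀w, by simp⟩
    | @insert S F hSF ih =>
      intro hmem
      obtain ⟨J, hJΩ, hJw, hJc, hJinv⟩ := ih (fun S hS => hmem S (Finset.mem_insert_of_mem hS))
      have hSΩ : S ∈ Omega G := (hmem S (Finset.mem_insert_self _ _)).1
      have hSw : w ∉ S := (hmem S (Finset.mem_insert_self _ _)).2
      have hSc : S ⊆ U ∪ W := hsub hSΩ hSw
      set X := (U ∩ (J ∪ S)) ∪ (W ∩ (J ∩ S)) with hX
      set Y := (U ∩ (J ∩ S)) ∪ (W ∩ (J ∪ S)) with hY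
      have hXi : IsIndepSet G X := op_indep hU hW hdisj hJΩ.1 hSΩ.1 hJc hSc
      have hYi : IsIndepSet G Y := by
        rw [hY, Set.union_comm]
        exact op_indep hW hU hdisj.symm hJΩ.1 hSΩ.1
          (fun x hx => (hJc hx).symm) (fun x hx => (hSc hx).symm)
      have hsum := op_ncard hdisj hJc hSc
      rw [← hX, ← hY] at hsum
      rw [hJΩ.2, hSΩ.2] at hsum
      have hXle := indep_ncard_le_alpha hXi
      have hYle := indep_ncard_le_alpha hYi
      have hXα : X.ncard = alpha G := by omega
      refine ⟨X, ⟨hXi, hXα⟩, ?_, ?_, ?_⟩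
      · rintro (⟨h, -⟩ | ⟨h, -⟩) <;> [exact hwU h; exact hwW h]
      · rintro x (⟨h, -⟩ | ⟨h, -⟩) <;> [exact Or.inl h; exact Or.inr h]
      · intro S' hS'
        rcases Finset.mem_insert.1 hS' with rfl | hS'F
        · rintro x ⟨hxW, hxX⟩
          rcases hxX with ⟨hxU, -⟩ | ⟨-, -, hxS⟩
          · exact absurd hxW (Set.disjoint_left.1 hdisj hxU)
          · exact hxS
        · rintro x ⟨hxW, hxX⟩
          rcases hxX with ⟨hxU, -⟩ | ⟨-, hxJ, -⟩
          · exact absurd hxW (Set.disjoint_left.1 hdisj hxU)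
          · exact hJinv S' hS'F ⟨hxW, hxJ⟩
  obtain ⟨J₁, hJ₁Ω, hJ₁w, hJ₁c, hJ₁inv⟩ := stage1
    ((Set.toFinite {S | S ∈ Omega G ∧ w ∉ S}).toFinset)
    (fun S hS => by simpa using (Set.Finite.mem_toFinset _).1 hS)
  have hJ₁K : ∀ S ∈ Omega G, w ∉ S → W ∩ J₁ ⊆ S := by
    intro S hS hwS
    exact hJ₁inv S ((Set.Finite.mem_toFinset _).2 ⟨hS, hwS⟩)
  have stage2 : ∀ (F : Finset (Set V)), (∀ S ∈ F, S ∈ Omega G ∧ w ∈ S) →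
      ∃ J, J ∈ Omega G ∧ w ∉ J ∧ J ⊆ U ∪ W ∧ (∀ S ∈ Omega G, w ∉ S → W ∩ J ⊆ S) ∧
        ∀ S ∈ F, W ∩ J ⊆ S := by
    intro F
    induction F using Finset.induction_on with
    | empty =>
      intro _
      exact ⟨J₁, hJ₁Ω, hJ₁w, hJ₁c, hJ₁K, by simp⟩
    | @insert S F hSF ih =>
      intro hmem
      obtain ⟨J, hJΩ, hJw, hJc, hJK, hJinv⟩ := ih (fun S hS => hmem S (Finset.mem_insert_of_mem hS))
      have hSΩ : S ∈ Omega G := (hmem S (Finset.mem_insert_self _ _)).1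
      have hSw : w ∈ S := (hmem S (Finset.mem_insert_self _ _)).2
      set I := S \ {w} with hI
      have hIi : IsIndepSet G I := indep_subset Set.diff_subset hSΩ.1
      have hIc : I ⊆ U ∪ W := by
        rintro x ⟨hxS, hxw⟩
        exact hcover x (by simpa using hxw)
      have hIcard : I.ncard + 1 = alpha G := by
        rw [← hSΩ.2, hI]
        exact Set.ncard_diff_singleton_add_one hSw (Set.toFinite _)
      set X := (U ∩ (J ∪ I)) ∪ (W ∩ (J ∩ I)) with hX
      set Y := (U ∩ (J ∩ I)) ∪ (W ∩ (J ∪ I)) with hY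
      have hXi : IsIndepSet G X := op_indep hU hW hdisj hJΩ.1 hIi hJc hIc
      have hYi : IsIndepSet G Y := by
        rw [hY, Set.union_comm]
        exact op_indep hW hU hdisj.symm hJΩ.1 hIi
          (fun x hx => (hJc hx).symm) (fun x hx => (hIc hx).symm)
      have hsum := op_ncard hdisj hJc hIc
      rw [← hX, ← hY, hJΩ.2] at hsum
      have hXle := indep_ncard_le_alpha hXi
      have hYle := indep_ncard_le_alpha hYi
      by_cases hbad : Y.ncard = alpha G
      · exfalso
        have hYΩ : Y ∈ Omega G := ⟨hYi, hbad⟩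
        have hYw : w ∉ Y := by
          rintro (⟨h, -⟩ | ⟨h, -⟩) <;> [exact hwU h; exact hwW h]
        obtain ⟨y, hyY, hadj⟩ := exists_adj_of_maximal hYΩ hYw
        have hyI : y ∉ I := by
          intro hyI
          exact hSΩ.1 hSw hyI.1 hadj.ne hadj
        have hyWJ : y ∈ W ∩ J := by
          rcases hyY with ⟨hyU, hyJ, hyI'⟩ | ⟨hyW, hyJI⟩
          · exact absurd hyI' hyI
          · rcases hyJI with hyJ | hyI'
            · exact ⟨hyW, hyJ⟩
            · exact absurd hyI' hyI
        exact hnp y hadj (fun S' hS' hw' => hJK S' hS' hw' hyWJ) ⟨S, hSΩ, hSw⟩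
      · have hXα : X.ncard = alpha G := by omega
        refine ⟨X, ⟨hXi, hXα⟩, ?_, ?_, ?_, ?_⟩
        · rintro (⟨h, -⟩ | ⟨h, -⟩) <;> [exact hwU h; exact hwW h]
        · rintro x (⟨h, -⟩ | ⟨h, -⟩) <;> [exact Or.inl h; exact Or.inr h]
        · intro S' hS' hw' x hx
          obtain ⟨hxW, hxX⟩ := hx
          rcases hxX with ⟨hxU, -⟩ | ⟨-, hxJ, -⟩
          · exact absurd hxW (Set.disjoint_left.1 hdisj hxU)
          · exact hJK S' hS' hw' ⟨hxW, hxJ⟩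
        · intro S' hS'
          rcases Finset.mem_insert.1 hS' with rfl | hS'F
          · rintro x ⟨hxW, hxX⟩
            rcases hxX with ⟨hxU, -⟩ | ⟨-, -, hxI⟩
            · exact absurd hxW (Set.disjoint_left.1 hdisj hxU)
            · exact hxI.1
          · rintro x ⟨hxW, hxX⟩
            rcases hxX with ⟨hxU, -⟩ | ⟨-, hxJ, -⟩
            · exact absurd hxW (Set.disjoint_left.1 hdisj hxU)
            · exact hJinv S' hS'F ⟨hxW, hxJ⟩
  obtain ⟨J, hJΩ, hJw, _, hJK, hJinv⟩ := stage2
    ((Set.toFinite {S | S ∈ Omega G ∧ w ∈ S}).toFinset)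
    (fun S hS => by simpa using (Set.Finite.mem_toFinset _).1 hS)
  refine ⟨J, hJΩ, hJw, ?_⟩
  intro S hS
  by_cases hwS : w ∈ S
  · exact hJinv S ((Set.Finite.mem_toFinset _).2 ⟨hS, hwS⟩)
  · exact hJK S hS hwS


end Fold

section Konig
variable [Fintype V] {G : SimpleGraph V}

/-- Defect König: if the vertices other than `w` are 2-colored `U ⊔ W` (both independent),
`y` is a neighbour of `w`, and every independent subset of `(U ∪ W) \ {y}` has at most
`α - 1` vertices, then there is a matching of size at least `|V| - α`. -/
lemma partner_matching {w y : V} (hadj : G.Adj w y)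
    {U W : Set V} (hU : IsIndepSet G U) (hW : IsIndepSet G W) (hdisj : Disjoint U W)
    (hwU : w ∉ U) (hwW : w ∉ W) (hcover : ∀ x, x ≠ w → x ∈ U ∪ W)
    (hupper : ∀ A : Set V, IsIndepSet G A → A ⊆ (U ∪ W) \ {y} → A.ncard + 1 ≤ alpha G) :
    ∃ M : Set (Sym2 V), IsMatching G M ∧ Fintype.card V ≤ alpha G + M.ncard := by
  classical
  set A : Finset V := (Set.toFinite (U \ {y})).toFinset with hA
  set B : Finset V := (Set.toFinite (W \ {y})).toFinset with hB
  have hAmem : ∀ x, x ∈ A ↔ x ∈ U ∧ x ≠ y := by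
    intro x; rw [hA, Set.Finite.mem_toFinset]; simp [Set.mem_diff]
  have hBmem : ∀ x, x ∈ B ↔ x ∈ W ∧ x ≠ y := by
    intro x; rw [hB, Set.Finite.mem_toFinset]; simp [Set.mem_diff]
  set N : Finset V → Finset V := fun s => B.filter (fun b => ∃ a ∈ s, G.Adj a b) with hN
  have hNsub : ∀ s, N s ⊆ B := fun s => Finset.filter_subset _ _
  set d : ℕ := (A.powerset).sup (fun s => s.card - (N s).card) with hd
  have hdle : ∀ s ⊆ A, s.card ≤ (N s).card + d := by
    intro s hs
    have h : s.card - (N s).card ≤ d :=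
      Finset.le_sup (f := fun s => s.card - (N s).card) (Finset.mem_powerset.2 hs)
    omega
  -- attainment of the deficiency
  obtain ⟨s₀, hs₀A, hs₀⟩ : ∃ s₀, s₀ ⊆ A ∧ (N s₀).card + d ≤ s₀.card := by
    rcases Nat.eq_zero_or_pos d with h0 | hpos
    · refine ⟨∅, Finset.empty_subset _, ?_⟩
      have : N ∅ = ∅ := by
        rw [hN]
        simp
      rw [this, h0]
      simp
    · obtain ⟨s₀, hs₀mem, hs₀eq⟩ := Finset.exists_mem_eq_sup (A.powerset)
        ⟨∅, Finset.empty_mem_powerset _⟩ (fun s => s.card - (N s).card)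
      refine ⟨s₀, Finset.mem_powerset.1 hs₀mem, ?_⟩
      rw [hd] at hpos ⊢
      omega
  -- the independent set witnessing the deficiency
  have hindep0 : IsIndepSet G ((s₀ : Set V) ∪ ((B \ N s₀ : Finset V) : Set V)) := by
    intro a ha b hb hne hadj'
    have key : ∀ p q : V, p ∈ (s₀ : Set V) → q ∈ ((B \ N s₀ : Finset V) : Set V) →
        ¬ G.Adj p q := by
      intro p q hp hq hpq
      have hqmem := Finset.mem_sdiff.1 (by exact_mod_cast hq)
      exact hqmem.2 (Finset.mem_filter.2 ⟨hqmem.1, ⟨p, by exact_mod_cast hp, hpq⟩⟩)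
    rcases ha with ha | ha
    · rcases hb with hb | hb
      · have haU : a ∈ U := ((hAmem a).1 (hs₀A (by exact_mod_cast ha))).1
        have hbU : b ∈ U := ((hAmem b).1 (hs₀A (by exact_mod_cast hb))).1
        exact hU haU hbU hne hadj'
      · exact key a b ha hb hadj'
    · rcases hb with hb | hb
      · exact key b a hb ha hadj'.symm
      · have haW : a ∈ W := ((hBmem a).1 (Finset.mem_sdiff.1 (by exact_mod_cast ha)).1).1
        have hbW : b ∈ W := ((hBmem b).1 (Finset.mem_sdiff.1 (by exact_mod_cast hb)).1).1
        exact hW haW hbW hne hadj'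
  have hBd : B.card + d + 1 ≤ alpha G := by
    have hsubUW : ((s₀ : Set V) ∪ ((B \ N s₀ : Finset V) : Set V)) ⊆ (U ∪ W) \ {y} := by
      intro x hx
      rcases hx with hx | hx
      · have := (hAmem x).1 (hs₀A (by exact_mod_cast hx))
        exact ⟨Or.inl this.1, by simpa using this.2⟩
      · have := (hBmem x).1 (Finset.mem_sdiff.1 (by exact_mod_cast hx)).1
        exact ⟨Or.inr this.1, by simpa using this.2⟩
    have hcard : ((s₀ : Set V) ∪ ((B \ N s₀ : Finset V) : Set V)).ncard
        = s₀.card + (B.card - (N s₀).card) := by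
      have hdisj0 : Disjoint (s₀ : Set V) ((B \ N s₀ : Finset V) : Set V) := by
        rw [Set.disjoint_left]
        intro x hx hx'
        have hxU : x ∈ U := ((hAmem x).1 (hs₀A (by exact_mod_cast hx))).1
        have hxW : x ∈ W := ((hBmem x).1 (Finset.mem_sdiff.1 (by exact_mod_cast hx')).1).1
        exact Set.disjoint_left.1 hdisj hxU hxW
      rw [Set.ncard_union_eq hdisj0 (Set.toFinite _) (Set.toFinite _)]
      rw [Set.ncard_coe_finset, Set.ncard_coe_finset, Finset.card_sdiff_of_subset (hNsub s₀)]
    have := hupper _ hindep0 hsubUW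
    rw [hcard] at this
    have hNle : (N s₀).card ≤ B.card := Finset.card_le_card (hNsub s₀)
    omega
  -- Hall's theorem with defect
  set t : {x // x ∈ A} → Finset (V ⊕ Fin d) := fun a =>
    (N {a.1}).map ⟨Sum.inl, Sum.inl_injective⟩ ∪
      Finset.univ.map ⟨Sum.inr, Sum.inr_injective⟩ with ht
  have hmem_N : ∀ (s : Finset V) (b : V), b ∈ N s ↔ b ∈ B ∧ ∃ a ∈ s, G.Adj a b := by
    intro s b
    rw [hN]
    exact Finset.mem_filter
  have hmem_t : ∀ (a : {x // x ∈ A}) (z : V ⊕ Fin d),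
      z ∈ t a ↔ (∃ b ∈ N {a.1}, z = Sum.inl b) ∨ (∃ i : Fin d, z = Sum.inr i) := by
    intro a z
    rw [ht]
    simp only [Finset.mem_union, Finset.mem_map, Function.Embedding.coeFn_mk,
      Finset.mem_univ, true_and]
    constructor
    · rintro (⟨b, hb, h⟩ | ⟨i, h⟩)
      · exact Or.inl ⟨b, hb, h.symm⟩
      · exact Or.inr ⟨i, h.symm⟩
    · rintro (⟨b, hb, h⟩ | ⟨i, h⟩)
      · exact Or.inl ⟨b, hb, h.symm⟩
      · exact Or.inr ⟨i, h.symm⟩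
  have hhall : ∀ s : Finset {x // x ∈ A}, s.card ≤ (s.biUnion t).card := by
    intro s
    by_cases hse : s = ∅
    · subst hse; simp
    · set Big : Finset (V ⊕ Fin d) :=
        (N (s.image (fun a => a.1))).map ⟨Sum.inl, Sum.inl_injective⟩ ∪
          Finset.univ.map ⟨Sum.inr, Sum.inr_injective⟩ with hBig
      have himg : s.biUnion t = Big := by
        ext z
        rw [Finset.mem_biUnion, hBig, Finset.mem_union]
        constructor
        · rintro ⟨a, has, hz⟩
          rcases (hmem_t a z).1 hz with ⟨b, hb, rfl⟩ | ⟨i, rfl⟩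
          · left
            have hbmem : b ∈ N (s.image (fun a => a.1)) := by
              obtain ⟨hbB, a', ha', hab⟩ := (hmem_N _ b).1 hb
              rw [Finset.mem_singleton] at ha'
              exact (hmem_N _ b).2 ⟨hbB, a.1, Finset.mem_image_of_mem _ has, ha' ▸ hab⟩
            exact Finset.mem_map_of_mem _ hbmem
          · right
            exact Finset.mem_map_of_mem _ (Finset.mem_univ i)
        · intro hz
          rcases hz with hz | hz
          · rw [Finset.mem_map] at hz
            obtain ⟨b, hb, rfl⟩ := hz
            obtain ⟨hbB, a', ha', hab⟩ := (hmem_N _ b).1 hb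
            obtain ⟨a, has, rfl⟩ := Finset.mem_image.1 ha'
            refine ⟨a, has, (hmem_t a _).2 (Or.inl ⟨b, ?_, rfl⟩)⟩
            exact (hmem_N _ b).2 ⟨hbB, a.1, Finset.mem_singleton_self _, hab⟩
          · rw [Finset.mem_map] at hz
            obtain ⟨i, -, rfl⟩ := hz
            obtain ⟨a, has⟩ := Finset.nonempty_iff_ne_empty.2 hse
            exact ⟨a, has, (hmem_t a _).2 (Or.inr ⟨i, rfl⟩)⟩
      rw [himg, hBig]
      rw [Finset.card_union_of_disjoint (by
        rw [Finset.disjoint_left]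
        rintro z hz1 hz2
        rw [Finset.mem_map] at hz1 hz2
        obtain ⟨b, -, rfl⟩ := hz1
        obtain ⟨i, -, h⟩ := hz2
        exact Sum.inl_ne_inr h.symm)]
      rw [Finset.card_map, Finset.card_map, Finset.card_univ, Fintype.card_fin]
      have hscard : s.card = (s.image (fun a => a.1)).card := by
        rw [Finset.card_image_of_injective _ Subtype.val_injective]
      rw [hscard]
      exact hdle _ (by
        intro x hx
        obtain ⟨a, -, rfl⟩ := Finset.mem_image.1 hx
        exact a.2)
  obtain ⟨f, hfinj, hft⟩ := (Finset.all_card_le_biUnion_card_iff_exists_injective t).1 hhall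
  -- decode the Hall function into a matching
  have hleft : ∀ (a : {x // x ∈ A}) (b : V), f a = Sum.inl b → b ∈ B ∧ G.Adj a.1 b := by
    intro a b hb
    rcases (hmem_t a (f a)).1 (hft a) with ⟨b', hb', he⟩ | ⟨i, hi⟩
    · rw [hb] at he
      obtain rfl : b = b' := by exact Sum.inl.inj he
      obtain ⟨hbB, a', ha', hab⟩ := (hmem_N _ b).1 hb'
      rw [Finset.mem_singleton] at ha'
      exact ⟨hbB, ha' ▸ hab⟩
    · rw [hb] at hi
      exact absurd hi (by simp)
  set M₀ : Set (Sym2 V) := {e | ∃ (a : {x // x ∈ A}) (b : V), f a = Sum.inl b ∧ e = s(a.1, b)}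
    with hM₀
  set M : Set (Sym2 V) := insert s(w, y) M₀ with hM
  have hwA : ∀ x, x ∈ A → x ≠ w ∧ x ≠ y := by
    intro x hx
    have := (hAmem x).1 hx
    exact ⟨fun h => hwU (h ▸ this.1), this.2⟩
  have hwB : ∀ x, x ∈ B → x ≠ w ∧ x ≠ y := by
    intro x hx
    have := (hBmem x).1 hx
    exact ⟨fun h => hwW (h ▸ this.1), this.2⟩
  have hABdisj : ∀ x, x ∈ A → x ∈ B → False := by
    intro x hx hx'
    exact Set.disjoint_left.1 hdisj ((hAmem x).1 hx).1 ((hBmem x).1 hx').1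
  have hMmatch : IsMatching G M := by
    constructor
    · rintro e (rfl | ⟨a, b, hab, rfl⟩)
      · exact hadj
      · exact (hleft a b hab).2
    · rintro e (rfl | ⟨a₁, b₁, hab₁, rfl⟩) e' he' hne x hxe hxe'
      · -- e = s(w,y)
        rcases he' with rfl | ⟨a₂, b₂, hab₂, rfl⟩
        · exact hne rfl
        · rw [Sym2.mem_iff] at hxe hxe'
          have hb₂B := (hleft a₂ b₂ hab₂).1
          rcases hxe with rfl | rfl
          · rcases hxe' with h | h
            · exact (hwA _ a₂.2).1 h.symm
            · exact (hwB _ hb₂B).1 h.symm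
          · rcases hxe' with h | h
            · exact (hwA _ a₂.2).2 h.symm
            · exact (hwB _ hb₂B).2 h.symm
      · rcases he' with rfl | ⟨a₂, b₂, hab₂, rfl⟩
        · rw [Sym2.mem_iff] at hxe hxe'
          have hb₁B := (hleft a₁ b₁ hab₁).1
          rcases hxe with rfl | rfl
          · rcases hxe' with h | h
            · exact (hwA _ a₁.2).1 h
            · exact (hwA _ a₁.2).2 h
          · rcases hxe' with h | h
            · exact (hwB _ hb₁B).1 h
            · exact (hwB _ hb₁B).2 h
        · rw [Sym2.mem_iff] at hxe hxe'
          have hb₁B := (hleft a₁ b₁ hab₁).1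
          have hb₂B := (hleft a₂ b₂ hab₂).1
          have hane : a₁.1 ≠ a₂.1 := by
            intro h
            have : a₁ = a₂ := Subtype.ext h
            subst this
            rw [hab₁] at hab₂
            obtain rfl : b₁ = b₂ := Sum.inl.inj hab₂
            exact hne rfl
          have hbne : b₁ ≠ b₂ := by
            intro h
            subst h
            have : a₁ = a₂ := hfinj (by rw [hab₁, hab₂])
            subst this
            exact hne rfl
          rcases hxe with h1 | h1 <;> rcases hxe' with h2 | h2
          · exact hane (h1.symm.trans h2)
          · exact hABdisj x (by rw [h1]; exact a₁.2) (by rw [h2]; exact hb₂B)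
          · exact hABdisj x (by rw [h2]; exact a₂.2) (by rw [h1]; exact hb₁B)
          · exact hbne (h1.symm.trans h2)
  -- cardinality of the matching
  have hM₀fin : M₀.Finite := Set.toFinite _
  have hMcard : M.ncard = M₀.ncard + 1 := by
    rw [hM]
    rw [Set.ncard_insert_of_notMem ?_ hM₀fin]
    rintro ⟨a, b, hab, he⟩
    have : w ∈ s(a.1, b) := by rw [← he]; simp
    rw [Sym2.mem_iff] at this
    rcases this with h | h
    · exact (hwA _ a.2).1 h.symm
    · exact (hwB _ (hleft a b hab).1).1 h.symm
  have hM₀card : A.card ≤ M₀.ncard + d := by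
    classical
    set SL : Set {x // x ∈ A} := {a | ∃ b, f a = Sum.inl b} with hSL
    set SR : Set {x // x ∈ A} := {a | ∃ i, f a = Sum.inr i} with hSR
    have hcoverLR : SL ∪ SR = Set.univ := by
      ext a
      simp only [Set.mem_union, Set.mem_setOf_eq, Set.mem_univ, iff_true, hSL, hSR]
      cases h : f a with
      | inl b => exact Or.inl ⟨b, rfl⟩
      | inr i => exact Or.inr ⟨i, rfl⟩
    have hgR : ∀ a ∈ SR, ∃ i : Fin d, f a = Sum.inr i := fun a ha => ha
    choose gR hgR' using hgR
    have hSRle : SR.ncard ≤ d := by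
      set F2 : {x // x ∈ A} → ℕ := fun a => if h : a ∈ SR then (gR a h).1 else 0 with hF2
      have hinj : Set.InjOn F2 SR := by
        intro a₁ h₁ a₂ h₂ heq
        rw [hF2] at heq
        simp only [dif_pos h₁, dif_pos h₂] at heq
        have : gR a₁ h₁ = gR a₂ h₂ := Fin.ext heq
        apply hfinj
        rw [hgR' a₁ h₁, hgR' a₂ h₂, this]
      have himg : F2 '' SR ⊆ ↑(Finset.range d) := by
        rintro i ⟨a, ha, rfl⟩
        rw [hF2]
        simp only [dif_pos ha, Finset.coe_range, Set.mem_Iio]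
        exact (gR a ha).2
      calc SR.ncard = (F2 '' SR).ncard := (Set.ncard_image_of_injOn hinj).symm
        _ ≤ (↑(Finset.range d) : Set ℕ).ncard := Set.ncard_le_ncard himg (Set.toFinite _)
        _ = d := by rw [Set.ncard_coe_finset, Finset.card_range]
    have hgL : ∀ a ∈ SL, ∃ b : V, f a = Sum.inl b := fun a ha => ha
    choose gL hgL' using hgL
    have hSLle : SL.ncard ≤ M₀.ncard := by
      set F3 : {x // x ∈ A} → Sym2 V := fun a =>
        if h : a ∈ SL then s(a.1, gL a h) else s(w, y) with hF3
      have hinj : Set.InjOn F3 SL := by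
        intro a₁ h₁ a₂ h₂ heq
        rw [hF3] at heq
        simp only [dif_pos h₁, dif_pos h₂] at heq
        rw [Sym2.eq_iff] at heq
        rcases heq with ⟨ha, -⟩ | ⟨ha, hb⟩
        · exact Subtype.ext ha
        · exact absurd ((hleft a₂ _ (hgL' a₂ h₂)).1) (fun hB =>
            hABdisj _ a₁.2 (ha ▸ hB))
      have himg : F3 '' SL ⊆ M₀ := by
        rintro e ⟨a, ha, rfl⟩
        rw [hF3]
        simp only [dif_pos ha]
        exact ⟨a, gL a ha, hgL' a ha, rfl⟩
      calc SL.ncard = (F3 '' SL).ncard := (Set.ncard_image_of_injOn hinj).symm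
        _ ≤ M₀.ncard := Set.ncard_le_ncard himg hM₀fin
    have huniv : SL.ncard + SR.ncard ≥ A.card := by
      have h1 : (SL ∪ SR).ncard ≤ SL.ncard + SR.ncard := Set.ncard_union_le _ _
      rw [hcoverLR] at h1
      rw [Set.ncard_univ, Nat.card_eq_fintype_card, Fintype.card_coe] at h1
      omega
    omega
  -- total count
  have hABcard : A.card + B.card + 2 = Fintype.card V := by
    have hcoeA : (↑A : Set V) = U \ {y} := Set.Finite.coe_toFinset _
    have hcoeB : (↑B : Set V) = W \ {y} := Set.Finite.coe_toFinset _
    have hdisjAB : Disjoint (U \ {y}) (W \ {y}) :=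
      hdisj.mono Set.diff_subset Set.diff_subset
    have hunion : (U \ {y}) ∪ (W \ {y}) = (({w, y} : Set V))ᶜ := by
      ext x
      simp only [Set.mem_union, Set.mem_diff, Set.mem_singleton_iff, Set.mem_compl_iff,
        Set.mem_insert_iff]
      constructor
      · rintro (⟨hx, hxy⟩ | ⟨hx, hxy⟩)
        · exact fun h => h.elim (fun hw => hwU (hw ▸ hx)) hxy
        · exact fun h => h.elim (fun hw => hwW (hw ▸ hx)) hxy
      · intro h
        push_neg at h
        rcases hcover x h.1 with hx | hx
        · exact Or.inl ⟨hx, h.2⟩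
        · exact Or.inr ⟨hx, h.2⟩
    have h1 : A.card + B.card = (({w, y} : Set V))ᶜ.ncard := by
      rw [← Set.ncard_coe_finset A, ← Set.ncard_coe_finset B, hcoeA, hcoeB,
        ← Set.ncard_union_eq hdisjAB (Set.toFinite _) (Set.toFinite _), hunion]
    have h2 : ({w, y} : Set V).ncard + (({w, y} : Set V))ᶜ.ncard = Fintype.card V := by
      rw [Set.ncard_add_ncard_compl, Nat.card_eq_fintype_card]
    have h3 : ({w, y} : Set V).ncard = 2 := Set.ncard_pair hadj.ne
    omega
  exact ⟨M, hMmatch, by omega⟩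


end Konig

section Assemble
variable [Fintype V] {G : SimpleGraph V}

lemma mu_eq {M : Set (Sym2 V)} (hM : IsMatching G M)
    (hn : Fintype.card V ≤ alpha G + M.ncard) : alpha G + mu G = Nat.card V := by
  have hbdd : BddAbove {n | ∃ M : Set (Sym2 V), IsMatching G M ∧ M.ncard = n} := by
    refine ⟨Fintype.card V, ?_⟩
    rintro n ⟨M', hM', rfl⟩
    have := matching_card_le G hM'
    omega
  have hge : M.ncard ≤ mu G := le_csSup hbdd ⟨M, hM, rfl⟩
  have hle : alpha G + mu G ≤ Fintype.card V := by
    have : mu G ∈ {n | ∃ M : Set (Sym2 V), IsMatching G M ∧ M.ncard = n} := by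
      apply Nat.sSup_mem
      · exact ⟨0, ∅, ⟨Set.empty_subset _, Set.pairwise_empty _⟩, by simp⟩
      · exact hbdd
    obtain ⟨M', hM', hMc⟩ := this
    rw [← hMc]
    exact matching_card_le G hM'
  rw [Nat.card_eq_fintype_card]
  omega

lemma cycle_two_nbrs {w₀ : V} {c' : G.Walk w₀ w₀} (hc : c'.IsCycle) :
    ∃ z₁ z₂, z₁ ≠ z₂ ∧ G.Adj w₀ z₁ ∧ G.Adj w₀ z₂ ∧ z₁ ∈ c'.support ∧ z₂ ∈ c'.support := by
  have hlen : 3 ≤ c'.length := hc.three_le_length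
  cases c' with
  | nil => simp at hlen
  | @cons _ b _ hadj q =>
    have hql : 2 ≤ q.length := by
      rw [Walk.length_cons] at hlen; omega
    obtain ⟨z₂, h₂, r, hqr⟩ : ∃ (z₂ : V) (h₂ : G.Adj w₀ z₂) (r : G.Walk z₂ b),
        q.reverse = Walk.cons h₂ r := by
      cases hrev : q.reverse with
      | nil =>
        have := congrArg Walk.length hrev
        rw [Walk.length_reverse, Walk.length_nil] at this
        omega
      | cons h₂ r => exact ⟨_, h₂, r, rfl⟩
    have hz₂q : s(w₀, z₂) ∈ q.edges := by
      have : s(w₀, z₂) ∈ q.reverse.edges := by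
        rw [hqr, Walk.edges_cons]
        exact List.mem_cons_self
      rwa [Walk.edges_reverse, List.mem_reverse] at this
    have hz₂mem : z₂ ∈ q.support := by
      have : z₂ ∈ q.reverse.support := by
        rw [hqr, Walk.support_cons]
        exact List.mem_cons_of_mem _ r.start_mem_support
      rwa [Walk.support_reverse, List.mem_reverse] at this
    refine ⟨b, z₂, ?_, hadj, h₂, ?_, ?_⟩
    · rintro rfl
      have hnodup := hc.edges_nodup
      rw [Walk.edges_cons] at hnodup
      exact (List.nodup_cons.1 hnodup).1 hz₂q
    · rw [Walk.support_cons]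
      exact List.mem_cons_of_mem _ q.start_mem_support
    · rw [Walk.support_cons]
      exact List.mem_cons_of_mem _ hz₂mem

lemma rotate_support_subset [DecidableEq V] {w x : V} {v₀ : V} (c : G.Walk v₀ v₀) (hw : w ∈ c.support)
    (hx : x ∈ (c.rotate w hw).support) : x ∈ c.support := by
  rw [(c.rotate w hw).support_eq_cons] at hx
  rcases List.mem_cons.1 hx with rfl | hx
  · exact hw
  · have := (c.support_rotate w hw).perm.mem_iff.1 hx
    rw [c.support_eq_cons]
    exact List.mem_cons_of_mem _ this

lemma final_step {v w : V} (hwv : w ≠ v) (hvcor : v ∉ corona G) (φ : V → Prop)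
    (hφ : ∀ x y, x ≠ w → y ≠ w → G.Adj x y → (φ x ↔ ¬ φ y))
    (hT₀ : ∃ T, T ∈ Omega G ∧ w ∉ T)
    (hnp : ∀ y, G.Adj w y → (∀ S ∈ Omega G, w ∉ S → y ∈ S) →
      (∃ S ∈ Omega G, w ∈ S) → False) :
    ∃ u ∈ core G, G.Adj v u := by
  set U : Set V := {x | x ≠ w ∧ (φ x ↔ φ v)} with hUdef
  set W : Set V := {x | x ≠ w ∧ ¬ (φ x ↔ φ v)} with hWdef
  have hU : IsIndepSet G U := by
    rintro x ⟨hxw, hxφ⟩ y ⟨hyw, hyφ⟩ hne hadj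
    have := hφ x y hxw hyw hadj
    tauto
  have hW : IsIndepSet G W := by
    rintro x ⟨hxw, hxφ⟩ y ⟨hyw, hyφ⟩ hne hadj
    have := hφ x y hxw hyw hadj
    tauto
  have hdisj : Disjoint U W := by
    rw [Set.disjoint_left]
    rintro x ⟨-, h1⟩ ⟨-, h2⟩
    exact h2 h1
  have hwU : w ∉ U := fun h => h.1 rfl
  have hwW : w ∉ W := fun h => h.1 rfl
  have hcover : ∀ x, x ≠ w → x ∈ U ∪ W := by
    intro x hx
    by_cases h : φ x ↔ φ v
    · exact Or.inl ⟨hx, h⟩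
    · exact Or.inr ⟨hx, h⟩
  obtain ⟨J, hJΩ, hJw, hJcore⟩ := main_fold hU hW hdisj hwU hwW hcover hT₀ hnp
  have hvJ : v ∉ J := fun h => hvcor ⟨J, hJΩ, h⟩
  obtain ⟨u, huJ, hadj⟩ := exists_adj_of_maximal hJΩ hvJ
  have huw : u ≠ w := fun h => hJw (h ▸ huJ)
  have hvw : v ≠ w := Ne.symm hwv
  have huW : u ∈ W := by
    have := hφ v u hvw huw hadj
    exact ⟨huw, by tauto⟩
  refine ⟨u, ?_, hadj⟩
  rw [core, Set.mem_sInter]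
  intro S hS
  exact hJcore S hS ⟨huW, huJ⟩


end Assemble
end Aux

end AlmostBip

open AlmostBip

/-- If `G` is an almost bipartite non-König-Egerváry graph, then
`corona(G) ∪ N(core(G)) = V(G)`. -/
theorem stmt_16 {V : Type*} [Fintype V] (G : SimpleGraph V)
    (hG : AlmostBipartite G) (hKE : ¬ KonigEgervary G) :
    corona G ∪ nbhd G (core G) = Set.univ := by
  classical
  rw [Set.eq_univ_iff_forall]
  intro v
  by_cases hvcor : v ∈ corona G
  · exact Or.inl hvcor
  refine Or.inr ?_
  obtain ⟨v₀, c, hUOC⟩ := hG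
  suffices h : ∃ u ∈ core G, G.Adj v u by
    obtain ⟨u, hu, hadj⟩ := h
    exact ⟨u, hu, hadj⟩
  by_cases hcore : ∃ w₀ ∈ c.support, w₀ ∈ core G
  · -- a cycle vertex in the core: its neighbours are in no MIS
    obtain ⟨w₀, hw₀supp, hw₀core⟩ := hcore
    obtain ⟨z₁, z₂, hzne, hadj₁, hadj₂, hz₁s, hz₂s⟩ :=
      cycle_two_nbrs (hUOC.1.1.rotate hw₀supp)
    have hz₁supp : z₁ ∈ c.support := rotate_support_subset c hw₀supp hz₁s
    have hz₂supp : z₂ ∈ c.support := rotate_support_subset c hw₀supp hz₂s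
    have hnoMIS : ∀ z, G.Adj w₀ z → ∀ S ∈ Omega G, z ∉ S := by
      intro z hadj S hS hzS
      have hw₀S : w₀ ∈ S := hw₀core S hS
      exact hS.1 hw₀S hzS hadj.ne hadj
    obtain ⟨w, hwsupp, hadjw, hwv⟩ : ∃ w, w ∈ c.support ∧ G.Adj w₀ w ∧ w ≠ v := by
      by_cases h1 : z₁ = v
      · exact ⟨z₂, hz₂supp, hadj₂, fun h => hzne (h1 ▸ h ▸ rfl)⟩
      · exact ⟨z₁, hz₁supp, hadj₁, h1⟩
    obtain ⟨φ, hφ⟩ := exists_coloring hUOC hwsupp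
    apply final_step hwv hvcor φ hφ
    · obtain ⟨T, hT⟩ := Omega_nonempty G
      exact ⟨T, hT, hnoMIS w hadjw T hT⟩
    · rintro y - - ⟨S, hS, hwS⟩
      exact hnoMIS w hadjw S hS hwS
  · -- no cycle vertex is in the core
    push_neg at hcore
    obtain ⟨z₁, z₂, hzne, hadj₁, hadj₂, hz₁s, hz₂s⟩ :=
      cycle_two_nbrs (hUOC.1.1.rotate (c.start_mem_support))
    have hz₁supp : z₁ ∈ c.support := rotate_support_subset c _ hz₁s
    obtain ⟨w, hwsupp, hwv⟩ : ∃ w, w ∈ c.support ∧ w ≠ v := by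
      by_cases h1 : v₀ = v
      · refine ⟨z₁, hz₁supp, fun h => ?_⟩
        subst h1
        rw [h] at hadj₁
        exact G.loopless.irrefl v₀ hadj₁
      · exact ⟨v₀, c.start_mem_support, h1⟩
    obtain ⟨φ, hφ⟩ := exists_coloring hUOC hwsupp
    have hT₀ : ∃ T, T ∈ Omega G ∧ w ∉ T := by
      by_contra hcon
      push_neg at hcon
      exact hcore w hwsupp (fun S hS => hcon S hS)
    apply final_step hwv hvcor φ hφ hT₀
    -- no-partner: otherwise G would be König-Egerváry
    intro y hadjwy hyall _
    set U : Set V := {x | x ≠ w ∧ (φ x ↔ φ v)} with hUdef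
    set W : Set V := {x | x ≠ w ∧ ¬ (φ x ↔ φ v)} with hWdef
    have hU : IsIndepSet G U := by
      rintro x ⟨hxw, hxφ⟩ y' ⟨hyw, hyφ⟩ hne hadj
      have := hφ x y' hxw hyw hadj
      tauto
    have hW : IsIndepSet G W := by
      rintro x ⟨hxw, hxφ⟩ y' ⟨hyw, hyφ⟩ hne hadj
      have := hφ x y' hxw hyw hadj
      tauto
    have hdisj : Disjoint U W := by
      rw [Set.disjoint_left]
      rintro x ⟨-, h1⟩ ⟨-, h2⟩
      exact h2 h1
    have hwU : w ∉ U := fun h => h.1 rfl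
    have hwW : w ∉ W := fun h => h.1 rfl
    have hcover : ∀ x, x ≠ w → x ∈ U ∪ W := by
      intro x hx
      by_cases h : φ x ↔ φ v
      · exact Or.inl ⟨hx, h⟩
      · exact Or.inr ⟨hx, h⟩
    have hupper : ∀ A : Set V, IsIndepSet G A → A ⊆ (U ∪ W) \ {y} →
        A.ncard + 1 ≤ alpha G := by
      intro A hA hsub
      by_contra hcon
      push_neg at hcon
      have hle := indep_ncard_le_alpha hA
      have hAΩ : A ∈ Omega G := ⟨hA, by omega⟩
      have hwA : w ∉ A := by
        intro h
        rcases (hsub h).1 with h' | h'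
        · exact h'.1 rfl
        · exact h'.1 rfl
      have hyA : y ∈ A := hyall A hAΩ hwA
      exact (hsub hyA).2 rfl
    obtain ⟨M, hM, hn⟩ := partner_matching hadjwy hU hW hdisj hwU hwW hcover hupper
    exact hKE (mu_eq hM hn)
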